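/- Let f : ℝⁿ → ℝ be C¹ with ∇f ≠ 0 everywhere, and let g : ℝⁿ → ℝ be C¹ with compact support. If f is a weak solution of the 1-harmonic equation div(∇f/|∇f|) = 0 and ∇(f + t·g) ≠ 0 everywhere for all t ∈ [0,1], then for any bounded open set A containing the support of g, ∫_A |∇f| dx ≤ ∫_A |∇(f + g)| dx; that is, f has least gradient against C¹ perturbations. -/

import Mathlib

open MeasureTheory RealInnerProductSpace

/-!
Write `u = ∇f` and `v = ∇g`. Cauchy–Schwarz against the field `u / |u|` gives the pointwise
inequality `|u| + ⟪u / |u|, v⟫ ≤ |u + v|`, the subgradient inequality of the norm at `u`; this is the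
convexity of `t ↦ ∫_A |∇(f + t g)|` in pointwise form. Integrating over `A`, the middle term is the
weak 1-harmonic equation tested against `g`, so it vanishes.
-/

section Gradient

variable {𝕜 F : Type*} [RCLike 𝕜] [NormedAddCommGroup F] [InnerProductSpace 𝕜 F] [CompleteSpace F]

theorem gradient_fun_add {f g : F → 𝕜} {x : F} (hf : DifferentiableAt 𝕜 f x)
    (hg : DifferentiableAt 𝕜 g x) :
    gradient (fun y => f y + g y) x = gradient f x + gradient g x := by
  simp only [gradient, fderiv_fun_add hf hg, map_add]

theorem ContDiff.continuous_gradient {f : F → 𝕜} (hf : ContDiff 𝕜 1 f) :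
    Continuous (gradient f) :=
  (InnerProductSpace.toDual 𝕜 F).symm.continuous.comp (hf.continuous_fderiv one_ne_zero)

theorem gradient_eq_zero_of_notMem_tsupport {f : F → 𝕜} {x : F} (hx : x ∉ tsupport f) :
    gradient f x = 0 := by
  simp only [gradient, fderiv_of_notMem_tsupport 𝕜 hx, map_zero]

end Gradient

theorem norm_inv_norm_smul_le_one {E : Type*} [SeminormedAddCommGroup E] [NormedSpace ℝ E]
    (u : E) : ‖‖u‖⁻¹ • u‖ ≤ 1 :=
  mem_closedBall_zero_iff.mp (inv_norm_smul_mem_unitClosedBall u)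

section UnitField

variable {F : Type*} [NormedAddCommGroup F] [InnerProductSpace ℝ F]

theorem norm_add_inner_inv_norm_smul_le (u v : F) : ‖u‖ + ⟪‖u‖⁻¹ • u, v⟫ ≤ ‖u + v‖ := by
  have h_self : ⟪‖u‖⁻¹ • u, u⟫ = ‖u‖ := by
    rw [real_inner_smul_left, real_inner_self_eq_norm_sq]
    rcases eq_or_ne ‖u‖ 0 with h | h
    · simp [h]
    · field_simp
  calc ‖u‖ + ⟪‖u‖⁻¹ • u, v⟫ = ⟪‖u‖⁻¹ • u, u + v⟫ := by rw [inner_add_right, h_self]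
    _ ≤ ‖‖u‖⁻¹ • u‖ * ‖u + v‖ := real_inner_le_norm _ _
    _ ≤ ‖u + v‖ := mul_le_of_le_one_left (norm_nonneg _) (norm_inv_norm_smul_le_one u)

theorem norm_inner_inv_norm_smul_le (u v : F) : ‖⟪‖u‖⁻¹ • u, v⟫‖ ≤ ‖v‖ :=
  (norm_inner_le_norm _ _).trans <|
    mul_le_of_le_one_left (norm_nonneg _) (norm_inv_norm_smul_le_one u)

variable {α : Type*} [MeasurableSpace α] {μ : Measure α}

theorem MeasureTheory.IntegrableOn.inner_inv_norm_smul {u v : α → F} {A : Set α}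
    (hu : IntegrableOn u A μ)
    (hv : IntegrableOn v A μ) : IntegrableOn (fun x => ⟪‖u x‖⁻¹ • u x, v x⟫) A μ := by
  have hN : AEStronglyMeasurable (fun x => ‖u x‖⁻¹ • u x) (μ.restrict A) :=
    hu.aestronglyMeasurable.norm.aemeasurable.inv.aestronglyMeasurable.smul hu.aestronglyMeasurable
  exact hv.norm.mono' (hN.inner hv.aestronglyMeasurable)
    (Filter.Eventually.of_forall fun x => norm_inner_inv_norm_smul_le (u x) (v x))

theorem setIntegral_norm_le_norm_add_of_integral_inner_inv_norm_smul_eq_zero {u v : α → F}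
    {A : Set α} (hu : IntegrableOn u A μ) (hv : IntegrableOn v A μ) (hvA : ∀ x ∉ A, v x = 0)
    (h_weak : ∫ x, ⟪‖u x‖⁻¹ • u x, v x⟫ ∂μ = 0) :
    ∫ x in A, ‖u x‖ ∂μ ≤ ∫ x in A, ‖u x + v x‖ ∂μ := by
  have h_inner := hu.inner_inv_norm_smul hv
  have h_zero : ∫ x in A, ⟪‖u x‖⁻¹ • u x, v x⟫ ∂μ = 0 := by
    rw [setIntegral_eq_integral_of_forall_compl_eq_zero fun x hx => by simp [hvA x hx], h_weak]
  calc ∫ x in A, ‖u x‖ ∂μ = ∫ x in A, ‖u x‖ + ⟪‖u x‖⁻¹ • u x, v x⟫ ∂μ := by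
        rw [integral_add hu.norm h_inner, h_zero, add_zero]
    _ ≤ ∫ x in A, ‖u x + v x‖ ∂μ :=
        setIntegral_mono (hu.norm.add h_inner) (hu.add hv).norm
          fun x => norm_add_inner_inv_norm_smul_le (u x) (v x)

end UnitField

theorem one_harmonic_least_gradient_general (n : ℕ) (f g : EuclideanSpace ℝ (Fin n) → ℝ)
    (hf : ContDiff ℝ 1 f)
    (hg : ContDiff ℝ 1 g) (hgc : HasCompactSupport g)
    (hweak : ∀ φ : EuclideanSpace ℝ (Fin n) → ℝ,
      ContDiff ℝ 1 φ → HasCompactSupport φ →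
      ∫ x, ⟪(‖gradient f x‖)⁻¹ • gradient f x, gradient φ x⟫ = 0)
    (A : Set (EuclideanSpace ℝ (Fin n)))
    (hAb : Bornology.IsBounded A) (hsupp : tsupport g ⊆ A) :
    ∫ x in A, ‖gradient f x‖ ≤ ∫ x in A, ‖gradient (fun y => f y + g y) x‖ := by
  have h_int {φ : EuclideanSpace ℝ (Fin n) → ℝ} (hφ : ContDiff ℝ 1 φ) :
      IntegrableOn (gradient φ) A :=
    (hφ.continuous_gradient.continuousOn.integrableOn_compact hAb.isCompact_closure).mono_set
      subset_closure
  have h_sum : ∀ x, gradient (fun y => f y + g y) x = gradient f x + gradient g x := fun x =>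
    gradient_fun_add (hf.differentiable one_ne_zero x) (hg.differentiable one_ne_zero x)
  simp only [h_sum]
  exact setIntegral_norm_le_norm_add_of_integral_inner_inv_norm_smul_eq_zero (h_int hf) (h_int hg)
    (fun x hx => gradient_eq_zero_of_notMem_tsupport fun hx' => hx (hsupp hx')) (hweak g hg hgc)

/-- A C¹ weak solution of the 1-harmonic equation has least gradient against
C¹ compactly supported perturbations. -/
theorem one_harmonic_least_gradient (n : ℕ) (f g : EuclideanSpace ℝ (Fin n) → ℝ)
    (hf : ContDiff ℝ 1 f) (hf0 : ∀ x, gradient f x ≠ 0)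
    (hg : ContDiff ℝ 1 g) (hgc : HasCompactSupport g)
    (hweak : ∀ φ : EuclideanSpace ℝ (Fin n) → ℝ,
      ContDiff ℝ 1 φ → HasCompactSupport φ →
      ∫ x, ⟪(‖gradient f x‖)⁻¹ • gradient f x, gradient φ x⟫ = 0)
    (hnz : ∀ t ∈ Set.Icc (0 : ℝ) 1, ∀ x, gradient (fun y => f y + t * g y) x ≠ 0)
    (A : Set (EuclideanSpace ℝ (Fin n))) (hA : IsOpen A)
    (hAb : Bornology.IsBounded A) (hsupp : tsupport g ⊆ A) :
    ∫ x in A, ‖gradient f x‖ ≤ ∫ x in A, ‖gradient (fun y => f y + g y) x‖ :=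
  one_harmonic_least_gradient_general n f g hf hg hgc hweak A hAb hsupp
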